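/- Let n ≥ 1 and let μ be the uniform (rotation-invariant) probability measure on the unit sphere in EuclideanSpace ℝ (Fin (4n)). For x on the sphere let q_i(x) ∈ ℍ be the quaternion formed from the i-th block of four coordinates of x, let the edges be e_i(x) = 2·Hopf(q_i(x)), let the n+1 vertices be v_0(x) = 0 and v_m(x) = ∑_{i=0}^{m-1} e_i(x) for 1 ≤ m ≤ n, and let Gyradius(x) = (1/(2(n+1)²)) · ∑_{i=0}^{n} ∑_{j=0}^{n} ‖v_i(x) − v_j(x)‖². Then ∫ Gyradius(x) dμ(x) = 2(n+2)/((n+1)(2n+1)), that is, E(Gyradius, Arm₃(n)) = (n+2)/((n+1)(n + 1/2)). -/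

import Mathlib

/-!
For a rotation-invariant probability measure on the unit sphere of a `d`-dimensional space, the
quartic moment `∫ ⟪w, x⟫ ^ 4` is the same for all unit vectors `w` (a reflection carries any
unit vector to any other). Comparing `u + v` and `u - v` with `√2 • u` for orthonormal `u, v`
gives `∫ ⟪u, x⟫ ^ 2 ⟪v, x⟫ ^ 2 = (∫ ⟪u, x⟫ ^ 4) / 3`, and `‖x‖ = 1` then fixes
`∫ (∑ i < m, ⟪vᵢ, x⟫ ^ 2) ^ 2 = m (m + 2) / (d (d + 2))` for orthonormal `v`.

Since `‖Hopf q‖ = ‖q‖ ^ 2`, this gives `∫ ‖eₖ‖ ^ 2 = 4 · 24 / (4n (4n + 2))` for each edge. Distinct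
edges are uncorrelated: multiplying the `k`-th quaternion block on the left by `𝐣` is an isometry
of `ℝ^{4n}` that negates `Hopf qₖ` and fixes the other blocks. Hence
`∫ ‖vᵢ - vⱼ‖ ^ 2 = 12 |i - j| / (n (2n + 1))`, and `∑ᵢ ∑ⱼ |i - j| = n (n + 1) (n + 2) / 3`.
-/

open scoped Quaternion
open MeasureTheory Real

/-- The quaternion unit 𝐢. -/
noncomputable def qI : ℍ[ℝ] := ⟨0, 1, 0, 0⟩

/-- The Hopf map `q ↦ q̄ · 𝐢 · q`. -/
noncomputable def Hopf (q : ℍ[ℝ]) : ℍ[ℝ] := star q * qI * q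

/-- The quaternion formed from the `i`-th block of four coordinates of `x ∈ ℝ^{4n}`. -/
noncomputable def blockQuat (n : ℕ) (i : Fin n) (x : EuclideanSpace ℝ (Fin (4 * n))) : ℍ[ℝ] :=
  ⟨x ⟨4 * i, by have := i.isLt; omega⟩, x ⟨4 * i + 1, by have := i.isLt; omega⟩,
   x ⟨4 * i + 2, by have := i.isLt; omega⟩, x ⟨4 * i + 3, by have := i.isLt; omega⟩⟩

/-- The `m`-th vertex (partial sum of edges, starting at the origin) of the spatial arm
determined by `√2·x`, whose edges are `eᵢ(x) = 2·Hopf(qᵢ(x))`. -/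
noncomputable def armVertex (n : ℕ) (m : Fin (n + 1)) (x : EuclideanSpace ℝ (Fin (4 * n))) :
    ℍ[ℝ] :=
  ∑ i : Fin n, if (i : ℕ) < (m : ℕ) then (2 : ℝ) • Hopf (blockQuat n i x) else 0

open scoped RealInnerProductSpace

section SphereSupported

variable {E : Type*} [NormedAddCommGroup E] [MeasurableSpace E] [OpensMeasurableSpace E]
  {μ : Measure E} [IsProbabilityMeasure μ]

theorem ae_norm_eq_one (hsphere : μ (Metric.sphere 0 1) = 1) : ∀ᵐ x ∂μ, ‖x‖ = 1 := by
  have h : Metric.sphere (0 : E) 1 ∈ ae μ :=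
    mem_ae_iff.2 ((prob_compl_eq_zero_iff Metric.isClosed_sphere.measurableSet).2 hsphere)
  filter_upwards [h] with x hx using mem_sphere_zero_iff_norm.1 hx

theorem integrable_of_continuous_of_measure_sphere [ProperSpace E]
    (hsphere : μ (Metric.sphere 0 1) = 1) {f : E → ℝ} (hf : Continuous f) : Integrable f μ := by
  obtain ⟨C, hC⟩ := (isCompact_sphere (0 : E) 1).exists_bound_of_continuousOn hf.continuousOn
  refine Integrable.mono' (integrable_const C) hf.aestronglyMeasurable ?_
  filter_upwards [ae_norm_eq_one hsphere] with x hx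
  exact hC x (mem_sphere_zero_iff_norm.2 hx)

end SphereSupported

section RotationInvariant

variable {E : Type*} [NormedAddCommGroup E] [InnerProductSpace ℝ E] [MeasurableSpace E]
  [BorelSpace E] {μ : Measure E}

def IsRotationInvariant (μ : Measure E) : Prop :=
  ∀ O : E ≃ₗᵢ[ℝ] E, μ.map (fun x => O x) = μ

theorem integral_comp_linearIsometryEquiv (hinv : IsRotationInvariant μ) (O : E ≃ₗᵢ[ℝ] E)
    (f : E → ℝ) : ∫ x, f (O x) ∂μ = ∫ x, f x ∂μ := by
  have h := integral_map_equiv (μ := μ) O.toHomeomorph.toMeasurableEquiv f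
  rw [show μ.map O.toHomeomorph.toMeasurableEquiv = μ from hinv O] at h
  exact h.symm

theorem integral_eq_zero_of_comp_eq_neg (hinv : IsRotationInvariant μ) (O : E ≃ₗᵢ[ℝ] E)
    {f : E → ℝ} (hf : ∀ x, f (O x) = -f x) : ∫ x, f x ∂μ = 0 := by
  have h := integral_comp_linearIsometryEquiv hinv O f
  simp only [hf, integral_neg] at h
  linarith

theorem integral_comp_inner_eq_of_norm_eq [CompleteSpace E] (hinv : IsRotationInvariant μ)
    {u v : E} (h : ‖u‖ = ‖v‖) (g : ℝ → ℝ) : ∫ x, g ⟪u, x⟫ ∂μ = ∫ x, g ⟪v, x⟫ ∂μ := by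
  set R := Submodule.reflection (ℝ ∙ (u - v))ᗮ
  have hR : ∀ x, ⟪u, R x⟫ = ⟪v, x⟫ := fun x => by
    rw [← Submodule.reflection_sub h, ← R.inner_map_map, Submodule.reflection_reflection]
  rw [← integral_comp_linearIsometryEquiv hinv R]
  simp only [hR]

variable [FiniteDimensional ℝ E] [IsProbabilityMeasure μ]

theorem three_mul_integral_inner_sq_mul_inner_sq (hsphere : μ (Metric.sphere 0 1) = 1)
    (hinv : IsRotationInvariant μ) {u v : E} (hu : ‖u‖ = 1) (hv : ‖v‖ = 1) (huv : ⟪u, v⟫ = 0) :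
    3 * ∫ x, ⟪u, x⟫ ^ 2 * ⟪v, x⟫ ^ 2 ∂μ = ∫ x, ⟪u, x⟫ ^ 4 ∂μ := by
  have h4 : ∀ w : E, ‖w‖ = √2 → ∫ x, ⟪w, x⟫ ^ 4 ∂μ = 4 * ∫ x, ⟪u, x⟫ ^ 4 ∂μ := by
    intro w hw
    have hnorm : ‖w‖ = ‖√2 • u‖ := by
      rw [hw, norm_smul, hu, Real.norm_of_nonneg (Real.sqrt_nonneg 2), mul_one]
    rw [integral_comp_inner_eq_of_norm_eq hinv hnorm (· ^ 4), ← integral_const_mul]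
    congr 1 with x
    rw [real_inner_smul_left, mul_pow, show √2 ^ 4 = (√2 ^ 2) ^ 2 by ring,
      Real.sq_sqrt zero_le_two]
    norm_num
  have hsqrt : √(‖u‖ * ‖u‖ + ‖v‖ * ‖v‖) = √2 := by norm_num [hu, hv]
  have hplus := h4 (u + v) ((norm_add_eq_sqrt_iff_real_inner_eq_zero.2 huv).trans hsqrt)
  have hminus := h4 (u - v) ((norm_sub_eq_sqrt_iff_real_inner_eq_zero.2 huv).trans hsqrt)
  have hvu : ∫ x, ⟪v, x⟫ ^ 4 ∂μ = ∫ x, ⟪u, x⟫ ^ 4 ∂μ :=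
    integral_comp_inner_eq_of_norm_eq hinv (hv.trans hu.symm) (· ^ 4)
  -- the odd terms of `⟪u + v, x⟫ ^ 4` and `⟪u - v, x⟫ ^ 4` cancel in the sum
  have hsum : ∀ x, ⟪u + v, x⟫ ^ 4 + ⟪u - v, x⟫ ^ 4
      = 2 * ⟪u, x⟫ ^ 4 + 12 * (⟪u, x⟫ ^ 2 * ⟪v, x⟫ ^ 2) + 2 * ⟪v, x⟫ ^ 4 := fun x => by
    rw [inner_add_left, inner_sub_left]
    ring
  have key := integral_congr_ae (μ := μ) (Filter.Eventually.of_forall hsum)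
  rw [integral_add, integral_add, integral_add, integral_const_mul, integral_const_mul,
    integral_const_mul, hplus, hminus, hvu] at key
  · linarith
  all_goals exact integrable_of_continuous_of_measure_sphere hsphere (by fun_prop)

theorem integral_sum_inner_sq_sq_eq_mul (hsphere : μ (Metric.sphere 0 1) = 1)
    (hinv : IsRotationInvariant μ) {ι : Type*} [Fintype ι] {v : ι → E} (hv : Orthonormal ℝ v)
    {w : E} (hw : ‖w‖ = 1) :
    ∫ x, (∑ i, ⟪v i, x⟫ ^ 2) ^ 2 ∂μ
      = Fintype.card ι * (Fintype.card ι + 2) / 3 * ∫ x, ⟪w, x⟫ ^ 4 ∂μ := by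
  classical
  set A := ∫ x, ⟪w, x⟫ ^ 4 ∂μ
  have hdiag : ∀ i, ∫ x, ⟪v i, x⟫ ^ 4 ∂μ = A := fun i =>
    integral_comp_inner_eq_of_norm_eq hinv ((hv.1 i).trans hw.symm) (· ^ 4)
  have hterm : ∀ i j, ∫ x, ⟪v i, x⟫ ^ 2 * ⟪v j, x⟫ ^ 2 ∂μ = if i = j then A else A / 3 := by
    intro i j
    split_ifs with hij
    · subst hij
      simp_rw [← pow_add]
      exact hdiag i
    · have h := three_mul_integral_inner_sq_mul_inner_sq hsphere hinv (hv.1 i) (hv.1 j)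
        (hv.2 hij)
      rw [hdiag i] at h
      linarith
  have hint : ∀ i j, Integrable (fun x => ⟪v i, x⟫ ^ 2 * ⟪v j, x⟫ ^ 2) μ := fun i j =>
    integrable_of_continuous_of_measure_sphere hsphere (by fun_prop)
  have hsplit : ∀ i j : ι,
      (if i = j then A else A / 3) = A / 3 + if i = j then 2 * A / 3 else 0 := fun i j => by
    split_ifs <;> ring
  calc ∫ x, (∑ i, ⟪v i, x⟫ ^ 2) ^ 2 ∂μ
      = ∫ x, ∑ i, ∑ j, ⟪v i, x⟫ ^ 2 * ⟪v j, x⟫ ^ 2 ∂μ := by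
        simp_rw [sq (∑ i, _), Finset.sum_mul_sum]
    _ = ∑ i, ∑ j, ∫ x, ⟪v i, x⟫ ^ 2 * ⟪v j, x⟫ ^ 2 ∂μ := by
        rw [integral_finsetSum _ fun i _ => integrable_finsetSum _ fun j _ => hint i j]
        simp_rw [integral_finsetSum _ fun j _ => hint _ j]
    _ = ∑ i : ι, ∑ j : ι, (if i = j then A else A / 3) := by simp_rw [hterm]
    _ = _ := by
        simp only [hsplit, Finset.sum_add_distrib, Finset.sum_ite_eq, Finset.mem_univ, if_true,
          Finset.sum_const, Finset.card_univ, nsmul_eq_mul]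
        ring

theorem finrank_mul_integral_inner_pow_four (hsphere : μ (Metric.sphere 0 1) = 1)
    (hinv : IsRotationInvariant μ) {w : E} (hw : ‖w‖ = 1) :
    Module.finrank ℝ E * (Module.finrank ℝ E + 2) / 3 * ∫ x, ⟪w, x⟫ ^ 4 ∂μ = 1 := by
  set b := stdOrthonormalBasis ℝ E
  have h := integral_sum_inner_sq_sq_eq_mul hsphere hinv b.orthonormal hw
  rw [Fintype.card_fin] at h
  rw [← h]
  calc ∫ x, (∑ i, ⟪b i, x⟫ ^ 2) ^ 2 ∂μ = ∫ _, (1 : ℝ) ∂μ := by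
        refine integral_congr_ae ?_
        filter_upwards [ae_norm_eq_one hsphere] with x hx
        rw [b.sum_sq_inner_right, hx]
        norm_num
    _ = 1 := by simp

theorem integral_sum_inner_sq_sq (hsphere : μ (Metric.sphere 0 1) = 1)
    (hinv : IsRotationInvariant μ) {ι : Type*} [Fintype ι] {v : ι → E} (hv : Orthonormal ℝ v) :
    ∫ x, (∑ i, ⟪v i, x⟫ ^ 2) ^ 2 ∂μ = Fintype.card ι * (Fintype.card ι + 2)
      / (Module.finrank ℝ E * (Module.finrank ℝ E + 2)) := by
  obtain ⟨w, hw⟩ := nonempty_of_measure_ne_zero (hsphere.trans_ne one_ne_zero)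
  have hw' : ‖w‖ = 1 := mem_sphere_zero_iff_norm.1 hw
  have hA := finrank_mul_integral_inner_pow_four hsphere hinv hw'
  rw [integral_sum_inner_sq_sq_eq_mul hsphere hinv hv hw', eq_div_iff]
  · linear_combination (Fintype.card ι * (Fintype.card ι + 2) : ℝ) * hA
  · intro h0
    rw [h0, zero_div, zero_mul] at hA
    exact zero_ne_one hA

end RotationInvariant

theorem integral_norm_sum_smul_sq {Ω : Type*} [MeasurableSpace Ω] {μ : Measure Ω} {F : Type*}
    [NormedAddCommGroup F] [InnerProductSpace ℝ F] {ι : Type*} [Fintype ι] [DecidableEq ι]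
    (e : ι → Ω → F) (hint : ∀ k l, Integrable (fun x => ⟪e k x, e l x⟫) μ) {σ : ℝ}
    (horth : ∀ k l, ∫ x, ⟪e k x, e l x⟫ ∂μ = if k = l then σ else 0) (c : ι → ℝ) :
    ∫ x, ‖∑ k, c k • e k x‖ ^ 2 ∂μ = σ * ∑ k, c k ^ 2 := by
  have hexpand : ∀ x, ‖∑ k, c k • e k x‖ ^ 2 = ∑ k, ∑ l, c k * c l * ⟪e k x, e l x⟫ :=
    fun x => by
      simp_rw [← real_inner_self_eq_norm_sq, sum_inner, inner_sum, real_inner_smul_left,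
        real_inner_smul_right, mul_assoc]
  simp_rw [hexpand]
  rw [integral_finsetSum _ fun k _ => integrable_finsetSum _ fun l _ => (hint k l).const_mul _]
  simp_rw [integral_finsetSum _ fun l _ => (hint _ l).const_mul _, integral_const_mul, horth,
    mul_ite, mul_zero, Finset.sum_ite_eq, Finset.mem_univ, if_true, Finset.mul_sum]
  exact Finset.sum_congr rfl fun k _ => by ring

theorem sum_range_abs_sub_self (m : ℕ) :
    ∑ i ∈ Finset.range m, |(i : ℝ) - m| = m * (m + 1) / 2 := by
  induction m with
  | zero => simp
  | succ m ih =>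
    have hstep : ∀ i ∈ Finset.range m, |(i : ℝ) - (m + 1 : ℕ)| = |(i : ℝ) - m| + 1 := by
      intro i hi
      have hi : (i : ℝ) < m := by exact_mod_cast Finset.mem_range.1 hi
      rw [abs_of_neg (by push_cast; linarith), abs_of_neg (by linarith)]
      push_cast
      ring
    rw [Finset.sum_range_succ, Finset.sum_congr rfl hstep, Finset.sum_add_distrib, ih]
    simp
    ring

theorem sum_range_sum_range_abs_sub (n : ℕ) :
    ∑ i ∈ Finset.range (n + 1), ∑ j ∈ Finset.range (n + 1), |(i : ℝ) - j|
      = n * (n + 1) * (n + 2) / 3 := by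
  induction n with
  | zero => simp
  | succ m ih =>
    simp only [Finset.sum_range_succ _ (m + 1), Finset.sum_add_distrib, ih]
    simp_rw [abs_sub_comm ((m + 1 : ℕ) : ℝ), sum_range_abs_sub_self, sub_self, abs_zero]
    push_cast
    ring

theorem sum_sum_abs_sub (n : ℕ) :
    ∑ i : Fin (n + 1), ∑ j : Fin (n + 1), |(i : ℝ) - j| = n * (n + 1) * (n + 2) / 3 := by
  rw [Finset.sum_congr rfl fun (i : Fin (n + 1)) _ =>
      Fin.sum_univ_eq_sum_range (fun j => |((i : ℕ) : ℝ) - j|) _,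
    Fin.sum_univ_eq_sum_range (fun i => ∑ j ∈ Finset.range (n + 1), |(i : ℝ) - j|),
    sum_range_sum_range_abs_sub]

theorem sum_ite_lt_sub_sq (n : ℕ) (i j : Fin (n + 1)) :
    ∑ k : Fin n, ((if (k : ℕ) < i then 1 else 0) - (if (k : ℕ) < j then 1 else 0) : ℝ) ^ 2
      = |(i : ℝ) - j| := by
  wlog hji : j ≤ i generalizing i j
  · rw [abs_sub_comm, ← this j i (le_of_not_ge hji)]
    exact Finset.sum_congr rfl fun k _ => by ring
  have hji' : (j : ℕ) ≤ i := hji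
  have hterm : ∀ k : Fin n,
      ((if (k : ℕ) < i then 1 else 0) - (if (k : ℕ) < j then 1 else 0) : ℝ) ^ 2
        = (if (k : ℕ) < i then 1 else 0) - (if (k : ℕ) < j then 1 else 0) := fun k => by
    split_ifs <;> first | omega | norm_num
  have hcount : ∀ m : Fin (n + 1), ∑ k : Fin n, (if (k : ℕ) < m then 1 else 0 : ℝ) = m := by
    intro m
    rw [Finset.sum_boole, Fin.card_filter_val_lt, min_eq_right (Nat.lt_succ_iff.1 m.isLt)]
  rw [Finset.sum_congr rfl fun k _ => hterm k, Finset.sum_sub_distrib, hcount, hcount,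
    abs_of_nonneg (sub_nonneg.2 (by exact_mod_cast hji'))]

noncomputable def qJ : ℍ[ℝ] := ⟨0, 0, 1, 0⟩

theorem norm_qI : ‖qI‖ = 1 := by
  rw [norm_eq_sqrt_real_inner, Quaternion.inner_self, Quaternion.normSq_def']
  simp [qI]

theorem norm_qJ : ‖qJ‖ = 1 := by
  rw [norm_eq_sqrt_real_inner, Quaternion.inner_self, Quaternion.normSq_def']
  simp [qJ]

theorem norm_Hopf (q : ℍ[ℝ]) : ‖Hopf q‖ = ‖q‖ ^ 2 := by
  rw [Hopf, norm_mul, norm_mul, norm_star, norm_qI, mul_one, sq]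

theorem Hopf_qJ_mul (q : ℍ[ℝ]) : Hopf (qJ * q) = -Hopf q := by
  have h : star qJ * qI * qJ = -qI := by
    ext <;> simp [Quaternion.re_mul, Quaternion.imI_mul, Quaternion.imJ_mul,
      Quaternion.imK_mul] <;> simp [qI, qJ]
  rw [Hopf, Hopf, star_mul,
    show star q * star qJ * qI * (qJ * q) = star q * (star qJ * qI * qJ) * q by noncomm_ring,
    h, mul_neg, neg_mul]

theorem continuous_Hopf : Continuous Hopf := by
  unfold Hopf
  fun_prop

noncomputable def mulLeftIsometry (u : ℍ[ℝ]) (hu : ‖u‖ = 1) : ℍ[ℝ] ≃ₗᵢ[ℝ] ℍ[ℝ] :=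
  LinearIsometry.toLinearIsometryEquiv ⟨LinearMap.mulLeft ℝ u, fun q => by simp [norm_mul, hu]⟩ rfl

theorem mulLeftIsometry_apply (u : ℍ[ℝ]) (hu : ‖u‖ = 1) (q : ℍ[ℝ]) :
    mulLeftIsometry u hu q = u * q := rfl

noncomputable def blockEquiv (n : ℕ) :
    EuclideanSpace ℝ (Fin (4 * n)) ≃ₗᵢ[ℝ] PiLp 2 (fun _ : Fin n => ℍ[ℝ]) :=
  (LinearIsometryEquiv.piLpCongrLeft 2 ℝ ℝ ((finCongr (Nat.mul_comm 4 n)).trans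
      (finProdFinEquiv.symm.trans (Equiv.sigmaEquivProd (Fin n) (Fin 4)).symm))).trans
    ((LinearIsometryEquiv.piLpCurry ℝ 2 (fun _ _ => ℝ)).trans
      (LinearIsometryEquiv.piLpCongrRight 2 fun _ => Quaternion.linearIsometryEquivTuple.symm))

theorem blockEquiv_apply (n : ℕ) (x : EuclideanSpace ℝ (Fin (4 * n))) (k : Fin n) :
    blockEquiv n x k = blockQuat n k x := by
  ext <;> simp [blockEquiv, blockQuat, LinearIsometryEquiv.piLpCongrLeft_apply,
    Equiv.piCongrLeft', Sigma.curry] <;>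
    exact congrArg _ (Fin.ext (by simp [finProdFinEquiv, add_comm]))

noncomputable def blockMap (n : ℕ) (U : Fin n → ℍ[ℝ] ≃ₗᵢ[ℝ] ℍ[ℝ]) :
    EuclideanSpace ℝ (Fin (4 * n)) ≃ₗᵢ[ℝ] EuclideanSpace ℝ (Fin (4 * n)) :=
  (blockEquiv n).trans ((LinearIsometryEquiv.piLpCongrRight 2 U).trans (blockEquiv n).symm)

theorem blockQuat_blockMap (n : ℕ) (U : Fin n → ℍ[ℝ] ≃ₗᵢ[ℝ] ℍ[ℝ])
    (x : EuclideanSpace ℝ (Fin (4 * n))) (k : Fin n) :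
    blockQuat n k (blockMap n U x) = U k (blockQuat n k x) := by
  rw [← blockEquiv_apply, blockMap, LinearIsometryEquiv.trans_apply,
    LinearIsometryEquiv.trans_apply, LinearIsometryEquiv.apply_symm_apply,
    LinearIsometryEquiv.piLpCongrRight_apply, PiLp.toLp_apply, blockEquiv_apply]

theorem continuous_blockQuat (n : ℕ) (k : Fin n) : Continuous (blockQuat n k) := by
  simp_rw [funext fun x => (blockEquiv_apply n x k).symm]
  exact (PiLp.continuous_apply 2 _ k).comp (blockEquiv n).continuous

theorem norm_blockQuat_sq (n : ℕ) (k : Fin n) (x : EuclideanSpace ℝ (Fin (4 * n))) :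
    ‖blockQuat n k x‖ ^ 2 = ∑ r : Fin 4,
      ⟪EuclideanSpace.single (⟨4 * k + r, by omega⟩ : Fin (4 * n)) (1 : ℝ), x⟫ ^ 2 := by
  rw [sq, ← Quaternion.normSq_eq_norm_mul_self, Quaternion.normSq_def', Fin.sum_univ_four]
  simp [EuclideanSpace.inner_single_left, blockQuat]

theorem orthonormal_single_block (n : ℕ) (k : Fin n) :
    Orthonormal ℝ fun r : Fin 4 =>
      EuclideanSpace.single (⟨4 * k + r, by omega⟩ : Fin (4 * n)) (1 : ℝ) := by
  have h := (EuclideanSpace.basisFun (Fin (4 * n)) ℝ).orthonormal.comp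
    (fun r : Fin 4 => (⟨4 * k + r, by omega⟩ : Fin (4 * n)))
    (fun r s h => Fin.ext (by simpa using h))
  simpa [Function.comp_def] using h

noncomputable def armEdge (n : ℕ) (k : Fin n) (x : EuclideanSpace ℝ (Fin (4 * n))) : ℍ[ℝ] :=
  (2 : ℝ) • Hopf (blockQuat n k x)

theorem continuous_armEdge (n : ℕ) (k : Fin n) : Continuous (armEdge n k) :=
  (continuous_Hopf.comp (continuous_blockQuat n k)).const_smul (2 : ℝ)

theorem continuous_armVertex (n : ℕ) (m : Fin (n + 1)) : Continuous (armVertex n m) := by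
  refine continuous_finsetSum _ fun k _ => ?_
  split_ifs
  exacts [continuous_armEdge n k, continuous_const]

theorem armVertex_sub_eq_sum (n : ℕ) (i j : Fin (n + 1)) (x : EuclideanSpace ℝ (Fin (4 * n))) :
    armVertex n i x - armVertex n j x = ∑ k : Fin n,
      ((if (k : ℕ) < i then 1 else 0) - (if (k : ℕ) < j then 1 else 0) : ℝ) • armEdge n k x := by
  simp only [armVertex, ← Finset.sum_sub_distrib]
  refine Finset.sum_congr rfl fun k _ => ?_
  split_ifs <;> simp [armEdge]

theorem integral_inner_Hopf_blockQuat_of_ne {n : ℕ} {μ : Measure (EuclideanSpace ℝ (Fin (4 * n)))}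
    (hinv : IsRotationInvariant μ) {k l : Fin n} (hkl : k ≠ l) :
    ∫ x, ⟪Hopf (blockQuat n k x), Hopf (blockQuat n l x)⟫ ∂μ = 0 := by
  refine integral_eq_zero_of_comp_eq_neg hinv (blockMap n fun k' =>
    if k' = k then mulLeftIsometry qJ norm_qJ else LinearIsometryEquiv.refl ℝ ℍ[ℝ]) fun x => ?_
  simp only [blockQuat_blockMap, ↓reduceIte, if_neg hkl.symm, mulLeftIsometry_apply, Hopf_qJ_mul,
    inner_neg_left, LinearIsometryEquiv.coe_refl, id]

section RandomArm

variable {n : ℕ} {μ : Measure (EuclideanSpace ℝ (Fin (4 * n)))} [IsProbabilityMeasure μ]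

theorem integral_norm_Hopf_blockQuat_sq (hsphere : μ (Metric.sphere 0 1) = 1)
    (hinv : IsRotationInvariant μ) (k : Fin n) :
    ∫ x, ‖Hopf (blockQuat n k x)‖ ^ 2 ∂μ = 3 / (n * (2 * n + 1)) := by
  simp_rw [norm_Hopf, norm_blockQuat_sq]
  rw [integral_sum_inner_sq_sq hsphere hinv (orthonormal_single_block n k),
    finrank_euclideanSpace, Fintype.card_fin, Fintype.card_fin]
  have hn : (n : ℝ) ≠ 0 := Nat.cast_ne_zero.2 (Fin.pos k).ne'
  field_simp
  push_cast
  ring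

theorem integral_inner_armEdge (hsphere : μ (Metric.sphere 0 1) = 1)
    (hinv : IsRotationInvariant μ) (k l : Fin n) :
    ∫ x, ⟪armEdge n k x, armEdge n l x⟫ ∂μ
      = if k = l then (12 : ℝ) / (n * (2 * n + 1)) else 0 := by
  simp_rw [armEdge, real_inner_smul_left, real_inner_smul_right]
  rw [integral_const_mul, integral_const_mul]
  split_ifs with hkl
  · subst hkl
    simp_rw [real_inner_self_eq_norm_sq]
    rw [integral_norm_Hopf_blockQuat_sq hsphere hinv]
    ring
  · rw [integral_inner_Hopf_blockQuat_of_ne hinv hkl, mul_zero, mul_zero]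

theorem integral_norm_armVertex_sub_sq (hsphere : μ (Metric.sphere 0 1) = 1)
    (hinv : IsRotationInvariant μ) (i j : Fin (n + 1)) :
    ∫ x, ‖armVertex n i x - armVertex n j x‖ ^ 2 ∂μ
      = 12 / (n * (2 * n + 1)) * |(i : ℝ) - j| := by
  have hint : ∀ k l, Integrable (fun x => ⟪armEdge n k x, armEdge n l x⟫) μ := fun k l =>
    integrable_of_continuous_of_measure_sphere hsphere
      ((continuous_armEdge n k).inner (continuous_armEdge n l))
  simp_rw [armVertex_sub_eq_sum]
  rw [integral_norm_sum_smul_sq (armEdge n) hint (integral_inner_armEdge hsphere hinv),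
    sum_ite_lt_sub_sq]

end RandomArm

/-- The expected radius of gyration of a random spatial arm of total length 2:
`E(Gyradius, Arm₃(n)) = (n+2)/((n+1)(n+1/2)) = 2(n+2)/((n+1)(2n+1))`.  Here `μ` is the
uniform (rotation-invariant) probability measure on the unit sphere in `ℝ^{4n}`. -/
theorem expected_gyradius_space_arm (n : ℕ) (hn : 1 ≤ n)
    (μ : Measure (EuclideanSpace ℝ (Fin (4 * n)))) [IsProbabilityMeasure μ]
    (hsphere : μ (Metric.sphere (0 : EuclideanSpace ℝ (Fin (4 * n))) 1) = 1)
    (hinv : ∀ O : EuclideanSpace ℝ (Fin (4 * n)) ≃ₗᵢ[ℝ] EuclideanSpace ℝ (Fin (4 * n)),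
      Measure.map (fun x => O x) μ = μ) :
    ∫ x, (1 / (2 * ((n : ℝ) + 1) ^ 2)) *
        ∑ i : Fin (n + 1), ∑ j : Fin (n + 1), ‖armVertex n i x - armVertex n j x‖ ^ 2 ∂μ
      = 2 * ((n : ℝ) + 2) / (((n : ℝ) + 1) * (2 * (n : ℝ) + 1)) := by
  have hint : ∀ i j, Integrable (fun x => ‖armVertex n i x - armVertex n j x‖ ^ 2) μ :=
    fun i j => integrable_of_continuous_of_measure_sphere hsphere
      (((continuous_armVertex n i).sub (continuous_armVertex n j)).norm.pow 2)
  rw [integral_const_mul,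
    integral_finsetSum _ fun i _ => integrable_finsetSum _ fun j _ => hint i j]
  simp_rw [integral_finsetSum _ fun j _ => hint _ j, integral_norm_armVertex_sub_sq hsphere hinv,
    ← Finset.mul_sum, sum_sum_abs_sub]
  have hn' : (n : ℝ) ≠ 0 := Nat.cast_ne_zero.2 (by omega)
  field_simp
  ring
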